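/- arXiv:1811.07661 — 2 statements merged into one kernel-verified Lean document; each statement's English description precedes it below -/
import Mathlib

section
/- Consider a network of m RFMIOs with feedback inputs u^i = c^i_0 + Σ_{k=1}^m c^i_k y^k, where c^i_0 > 0 and c^i_k ≥ 0. Then there exists at least one equilibrium in the open state space, i.e. a family e = (e^1,...,e^m) with e^i ∈ (0,1)^{n^i} for every i satisfying the network equilibrium equations. -/
open scoped BigOperators

/-- Extended occupancy vector of an RFM chain with `N + 1` sites:
the input value `u` at the left boundary, the state in the middle,
and `0` at the right boundary. -/
noncomputable def rfmExt {N : ℕ} (u : ℝ) (x : Fin (N + 1) → ℝ) : Fin (N + 3) → ℝ :=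
  Fin.cons u (Fin.snoc x 0)

/-- The flow into site `j` (so `j = 0` is the entry flow `λ₀ u (1 - x₁)`,
`j` internal is `λ_j x_j (1 - x_{j+1})` in 1-based notation,
and `j = N + 1` is the exit flow `λ_n x_n`). -/
noncomputable def rfmFlow {N : ℕ} (lam : Fin (N + 2) → ℝ) (u : ℝ)
    (x : Fin (N + 1) → ℝ) (j : Fin (N + 2)) : ℝ :=
  lam j * rfmExt u x j.castSucc * (1 - rfmExt u x j.succ)

/-- The vector field of a single RFMIO chain with input `u`. -/
noncomputable def rfmVF {N : ℕ} (lam : Fin (N + 2) → ℝ) (u : ℝ)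
    (x : Fin (N + 1) → ℝ) (j : Fin (N + 1)) : ℝ :=
  rfmFlow lam u x j.castSucc - rfmFlow lam u x j.succ

/-- The steady-state equations of an RFM chain with input `u`: all flows are equal,
i.e. `λ₀ u (1-e₁) = λ₁ e₁ (1-e₂) = ⋯ = λ_n e_n`. -/
def rfmSS {N : ℕ} (lam : Fin (N + 2) → ℝ) (u : ℝ) (e : Fin (N + 1) → ℝ) : Prop :=
  ∀ j : Fin (N + 1), rfmFlow lam u e j.castSucc = rfmFlow lam u e j.succ

/-- The input to RFMIO `i` in the network: `u^i = c^i_0 + ∑_k c^i_k y^k`,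
where `y^k = λ^k_{n^k} x^k_{n^k}` is the output of RFMIO `k`. -/
noncomputable def netInput {m : ℕ} {n : Fin m → ℕ}
    (lam : ∀ i : Fin m, Fin (n i + 2) → ℝ)
    (c0 : Fin m → ℝ) (c : Fin m → Fin m → ℝ)
    (z : ∀ i : Fin m, Fin (n i + 1) → ℝ) (i : Fin m) : ℝ :=
  c0 i + ∑ k : Fin m, c i k * (lam k (Fin.last (n k + 1)) * z k (Fin.last (n k)))

/-- The vector field of the network of `m` RFMIOs with feedback connections. -/
noncomputable def netVF {m : ℕ} {n : Fin m → ℕ}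
    (lam : ∀ i : Fin m, Fin (n i + 2) → ℝ)
    (c0 : Fin m → ℝ) (c : Fin m → Fin m → ℝ)
    (z : ∀ i : Fin m, Fin (n i + 1) → ℝ) : ∀ i : Fin m, Fin (n i + 1) → ℝ :=
  fun i => rfmVF (lam i) (netInput lam c0 c z i) (z i)

/-- The network equilibrium equations. -/
def netSS {m : ℕ} {n : Fin m → ℕ}
    (lam : ∀ i : Fin m, Fin (n i + 2) → ℝ)
    (c0 : Fin m → ℝ) (c : Fin m → Fin m → ℝ)
    (e : ∀ i : Fin m, Fin (n i + 1) → ℝ) : Prop :=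
  ∀ i : Fin m, rfmSS (lam i) (netInput lam c0 c e i) (e i)

open scoped unitInterval

/-!
Solving the balance equation `λ_{j-1} x_{j-1} (1 - x_j) = λ_j x_j (1 - x_{j+1})` of site `j`
for `x_j` gives `x_j = a / (a + b)` with `a = λ_{j-1} x_{j-1}` and `b = λ_j (1 - x_{j+1})`,
which is increasing in both neighbours `x_{j-1}` and `x_{j+1}`. Since the network inputs are
increasing in the outputs `λ_n x_n`, the map that replaces every site of every chain by its
balancing value is a monotone self-map of the cube `[0,1]^{Σ nⁱ}`, and Knaster–Tarski yields a
fixed point, which is a network equilibrium. Positivity of the inputs propagates `x_j > 0` from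
left to right, positivity of the exit rates propagates `x_j < 1` from right to left.
-/

section BalanceRatio

variable {a a' b b' : ℝ}

lemma div_add_mem_Icc (ha : 0 ≤ a) (hb : 0 ≤ b) : a / (a + b) ∈ Set.Icc (0 : ℝ) 1 :=
  ⟨by positivity, div_le_one_of_le₀ (le_add_of_nonneg_right hb) (add_nonneg ha hb)⟩

lemma div_add_le_div_add (ha : 0 ≤ a) (hb' : 0 ≤ b') (haa' : a ≤ a') (hbb' : b' ≤ b) :
    a / (a + b) ≤ a' / (a' + b') := by
  rcases ha.eq_or_lt with rfl | ha
  · simp only [zero_div]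
    exact div_nonneg (by linarith) (by linarith)
  rw [div_le_div_iff₀ (by linarith) (by linarith)]
  nlinarith [mul_le_mul haa' hbb' hb' (by linarith)]

lemma div_add_lt_one (ha : 0 ≤ a) (hb : 0 < b) : a / (a + b) < 1 :=
  (div_lt_one (by linarith)).2 (by linarith)

/-- With Lean's `0 / 0 = 0` this also holds in the degenerate case `a = b = 0`. -/
lemma mul_one_sub_div_add (ha : 0 ≤ a) (hb : 0 ≤ b) :
    a * (1 - a / (a + b)) = a / (a + b) * b := by
  rcases (add_nonneg ha hb).eq_or_lt with hab | hab
  · obtain ⟨rfl, rfl⟩ : a = 0 ∧ b = 0 := ⟨by linarith, by linarith⟩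
    simp
  · field_simp
    ring

end BalanceRatio

section Chain

variable {N : ℕ} (lam : Fin (N + 2) → ℝ) (u : ℝ) (x : Fin (N + 1) → ℝ)

@[simp]
lemma rfmExt_zero : rfmExt u x 0 = u := rfl

@[simp]
lemma rfmExt_castSucc_succ (j : Fin (N + 1)) : rfmExt u x j.castSucc.succ = x j := by
  simp [rfmExt]

@[simp]
lemma rfmExt_last : rfmExt u x (Fin.last (N + 2)) = 0 := by
  rw [← Fin.succ_last]
  simp [rfmExt]

lemma rfmExt_mono {u' : ℝ} {x' : Fin (N + 1) → ℝ} (hu : u ≤ u') (hx : x ≤ x') :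
    rfmExt u x ≤ rfmExt u' x' := by
  intro k
  induction k using Fin.cases with
  | zero => simpa using hu
  | succ k =>
    induction k using Fin.lastCases with
    | last => simp [rfmExt]
    | cast k => simpa [← Fin.succ_castSucc] using hx k

/-- The rate `λ_{j-1} x_{j-1}` (with `x_0 = u`) at which site `j` fills while it is empty. -/
noncomputable def rfmEntryRate (j : Fin (N + 1)) : ℝ :=
  lam j.castSucc * rfmExt u x j.castSucc.castSucc

/-- The rate `λ_j (1 - x_{j+1})` (with `x_{n+1} = 0`) at which site `j` empties while it is full. -/
noncomputable def rfmExitRate (j : Fin (N + 1)) : ℝ :=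
  lam j.succ * (1 - rfmExt u x j.succ.succ)

@[simp]
lemma rfmEntryRate_zero : rfmEntryRate lam u x 0 = lam 0 * u := rfl

@[simp]
lemma rfmEntryRate_succ (j : Fin N) :
    rfmEntryRate lam u x j.succ = lam j.succ.castSucc * x j.castSucc := by
  simp [rfmEntryRate]

@[simp]
lemma rfmExitRate_last : rfmExitRate lam u x (Fin.last N) = lam (Fin.last (N + 1)) := by
  simp [rfmExitRate, Fin.succ_last]

@[simp]
lemma rfmExitRate_castSucc (j : Fin N) :
    rfmExitRate lam u x j.castSucc = lam j.castSucc.succ * (1 - x j.succ) := by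
  rw [rfmExitRate, Fin.succ_castSucc j, rfmExt_castSucc_succ]

lemma rfmFlow_castSucc (j : Fin (N + 1)) :
    rfmFlow lam u x j.castSucc = rfmEntryRate lam u x j * (1 - x j) := by
  simp [rfmFlow, rfmEntryRate]

lemma rfmFlow_succ (j : Fin (N + 1)) :
    rfmFlow lam u x j.succ = x j * rfmExitRate lam u x j := by
  simp only [rfmFlow, rfmExitRate, ← Fin.succ_castSucc, rfmExt_castSucc_succ]
  ring

noncomputable def rfmBalance (j : Fin (N + 1)) : ℝ :=
  rfmEntryRate lam u x j / (rfmEntryRate lam u x j + rfmExitRate lam u x j)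

variable {lam u x}

lemma rfmEntryRate_nonneg (hlam : ∀ j, 0 ≤ lam j) (hu : 0 ≤ u) (hx : ∀ j, 0 ≤ x j)
    (j : Fin (N + 1)) : 0 ≤ rfmEntryRate lam u x j := by
  induction j using Fin.cases with
  | zero => simpa using mul_nonneg (hlam 0) hu
  | succ j => simpa using mul_nonneg (hlam _) (hx _)

lemma rfmExitRate_nonneg (hlam : ∀ j, 0 ≤ lam j) (hx : ∀ j, x j ≤ 1) (j : Fin (N + 1)) :
    0 ≤ rfmExitRate lam u x j := by
  induction j using Fin.lastCases with
  | last => simpa using hlam _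
  | cast j => simpa using mul_nonneg (hlam _) (sub_nonneg.2 (hx _))

lemma rfmBalance_mem_Icc (hlam : ∀ j, 0 ≤ lam j) (hu : 0 ≤ u) (hx : ∀ j, x j ∈ Set.Icc 0 1)
    (j : Fin (N + 1)) : rfmBalance lam u x j ∈ Set.Icc 0 1 :=
  div_add_mem_Icc (rfmEntryRate_nonneg hlam hu (fun j => (hx j).1) j)
    (rfmExitRate_nonneg hlam (fun j => (hx j).2) j)

lemma rfmBalance_mono {u' : ℝ} {x' : Fin (N + 1) → ℝ} (hlam : ∀ j, 0 ≤ lam j) (hu : 0 ≤ u)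
    (hx : ∀ j, 0 ≤ x j) (hx' : ∀ j, x' j ≤ 1) (huu' : u ≤ u') (hxx' : x ≤ x')
    (j : Fin (N + 1)) : rfmBalance lam u x j ≤ rfmBalance lam u' x' j :=
  div_add_le_div_add (rfmEntryRate_nonneg hlam hu hx j) (rfmExitRate_nonneg hlam hx' j)
    (mul_le_mul_of_nonneg_left (rfmExt_mono u x huu' hxx' _) (hlam _))
    (mul_le_mul_of_nonneg_left (sub_le_sub_left (rfmExt_mono u x huu' hxx' _) 1) (hlam _))

lemma rfmSS_of_rfmBalance_eq (hlam : ∀ j, 0 ≤ lam j) (hu : 0 ≤ u)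
    (hx : ∀ j, x j ∈ Set.Icc 0 1) (hfix : ∀ j, rfmBalance lam u x j = x j) : rfmSS lam u x := by
  intro j
  rw [rfmFlow_castSucc, rfmFlow_succ, ← hfix j]
  exact mul_one_sub_div_add (rfmEntryRate_nonneg hlam hu (fun j => (hx j).1) j)
    (rfmExitRate_nonneg hlam (fun j => (hx j).2) j)

lemma mem_Ioo_of_rfmBalance_eq (hlam : ∀ j, 0 < lam j) (hu : 0 < u)
    (hx : ∀ j, x j ∈ Set.Icc 0 1) (hfix : ∀ j, rfmBalance lam u x j = x j) (j : Fin (N + 1)) :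
    x j ∈ Set.Ioo 0 1 := by
  have hentry := rfmEntryRate_nonneg (fun j => (hlam j).le) hu.le (fun j => (hx j).1)
  have hexit := rfmExitRate_nonneg (u := u) (fun j => (hlam j).le) (fun j => (hx j).2)
  have hpos : ∀ j, 0 < x j := by
    refine Fin.induction ?_ (fun j hj => ?_)
    · rw [← hfix, rfmBalance]
      have ha : 0 < rfmEntryRate lam u x 0 := by simpa using mul_pos (hlam 0) hu
      exact div_pos ha (add_pos_of_pos_of_nonneg ha (hexit _))
    · rw [← hfix, rfmBalance]
      have ha : 0 < rfmEntryRate lam u x j.succ := by simpa using mul_pos (hlam _) hj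
      exact div_pos ha (add_pos_of_pos_of_nonneg ha (hexit _))
  have hlt : ∀ j, x j < 1 := by
    refine Fin.reverseInduction ?_ (fun j hj => ?_)
    · rw [← hfix, rfmBalance]
      exact div_add_lt_one (hentry _) (by simpa using hlam _)
    · rw [← hfix, rfmBalance]
      exact div_add_lt_one (hentry _) (by simpa using mul_pos (hlam _) (sub_pos.2 hj))
  exact ⟨hpos j, hlt j⟩

end Chain

section Network

variable {m : ℕ} {n : Fin m → ℕ} (lam : ∀ i : Fin m, Fin (n i + 2) → ℝ) (c0 : Fin m → ℝ)
  (c : Fin m → Fin m → ℝ)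

lemma le_netInput (hlam : ∀ i j, 0 ≤ lam i j) (hc : ∀ i k, 0 ≤ c i k)
    {z : ∀ i : Fin m, Fin (n i + 1) → ℝ} (hz : ∀ i j, 0 ≤ z i j) (i : Fin m) :
    c0 i ≤ netInput lam c0 c z i :=
  le_add_of_nonneg_right (Finset.sum_nonneg fun k _ =>
    mul_nonneg (hc i k) (mul_nonneg (hlam _ _) (hz _ _)))

lemma netInput_mono (hlam : ∀ i j, 0 ≤ lam i j) (hc : ∀ i k, 0 ≤ c i k)
    {z z' : ∀ i : Fin m, Fin (n i + 1) → ℝ} (hzz' : z ≤ z') (i : Fin m) :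
    netInput lam c0 c z i ≤ netInput lam c0 c z' i :=
  add_le_add_right (Finset.sum_le_sum fun k _ => mul_le_mul_of_nonneg_left
    (mul_le_mul_of_nonneg_left (hzz' k _) (hlam k _)) (hc i k)) _

noncomputable def netBalance (hlam : ∀ i j, 0 ≤ lam i j) (hc0 : ∀ i, 0 ≤ c0 i)
    (hc : ∀ i k, 0 ≤ c i k) :
    (∀ i : Fin m, Fin (n i + 1) → I) →o (∀ i : Fin m, Fin (n i + 1) → I) where
  toFun z i j :=
    ⟨rfmBalance (lam i) (netInput lam c0 c (fun i j => z i j) i) (fun j => z i j) j,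
      rfmBalance_mem_Icc (hlam i)
        ((hc0 i).trans (le_netInput lam c0 c hlam hc (fun i j => (z i j).2.1) i))
        (fun j => (z i j).2) j⟩
  monotone' z z' hzz' i j :=
    rfmBalance_mono (hlam i)
      ((hc0 i).trans (le_netInput lam c0 c hlam hc (fun i j => (z i j).2.1) i))
      (fun j => (z i j).2.1) (fun j => (z' i j).2.2)
      (netInput_mono lam c0 c hlam hc (fun i j => hzz' i j) i) (fun j => hzz' i j) j

end Network

/-- A network of `m` RFMIOs with feedback inputs
`u^i = c^i_0 + ∑_k c^i_k y^k` (with `c^i_0 > 0`, `c^i_k ≥ 0`) admits at least one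
equilibrium in the open state space. -/
theorem network_equilibrium_exists
    (m : ℕ) (n : Fin m → ℕ)
    (lam : ∀ i : Fin m, Fin (n i + 2) → ℝ)
    (hlam : ∀ (i : Fin m) (j : Fin (n i + 2)), 0 < lam i j)
    (c0 : Fin m → ℝ) (hc0 : ∀ i, 0 < c0 i)
    (c : Fin m → Fin m → ℝ) (hc : ∀ i k, 0 ≤ c i k) :
    ∃ e : ∀ i : Fin m, Fin (n i + 1) → ℝ,
      (∀ i j, e i j ∈ Set.Ioo (0 : ℝ) 1) ∧ netSS lam c0 c e := by
  set Φ := netBalance lam c0 c (fun i j => (hlam i j).le) (fun i => (hc0 i).le) hc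
  set z := Φ.lfp
  set e : ∀ i : Fin m, Fin (n i + 1) → ℝ := fun i j => z i j
  have he : ∀ i j, e i j ∈ Set.Icc 0 1 := fun i j => (z i j).2
  have hfix : ∀ i j, rfmBalance (lam i) (netInput lam c0 c e i) (e i) j = e i j :=
    fun i j => congrArg Subtype.val (congrFun (congrFun Φ.map_lfp i) j)
  have hu : ∀ i, 0 < netInput lam c0 c e i := fun i => (hc0 i).trans_le
    (le_netInput lam c0 c (fun i j => (hlam i j).le) hc (fun i j => (he i j).1) i)
  exact ⟨e, fun i => mem_Ioo_of_rfmBalance_eq (hlam i) (hu i) (he i) (hfix i),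
    fun i => rfmSS_of_rfmBalance_eq (fun j => (hlam i j).le) (hu i).le (he i) (hfix i)⟩
end

section
/- Let n ≥ 1 and λ_0,...,λ_n > 0, and let A(λ) be the associated (n+2)×(n+2) Jacobi matrix. Suppose e ∈ (0,1)^n satisfies the RFM steady-state equations, and set σ := (λ_n e_n)^{−1/2}. Then there exists a vector ζ ∈ ℝ^{n+2} with all entries positive such that A(λ)ζ = σζ and e_i = λ_i^{−1/2} σ^{−1} ζ_{i+2}/ζ_{i+1} for all i = 1,...,n. -/
open scoped BigOperators

/-- The off-diagonal entry `λ_j^{-1/2}` of the Jacobi matrix (0-based rate index),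
defined for all natural `j` for convenience. -/
noncomputable def jacobiEntry {N : ℕ} (lam : Fin (N + 2) → ℝ) (j : ℕ) : ℝ :=
  if h : j < N + 2 then (Real.sqrt (lam ⟨j, h⟩))⁻¹ else 0

/-- The `(n+2) × (n+2)` symmetric tridiagonal Jacobi matrix associated with an RFM
with `n = N + 1` sites and rates `λ₀, …, λ_n`: zero diagonal and off-diagonal entries
`A_{i,i+1} = A_{i+1,i} = λ_{i-1}^{-1/2}` (1-based indexing). -/
noncomputable def jacobiMat {N : ℕ} (lam : Fin (N + 2) → ℝ) :
    Matrix (Fin (N + 3)) (Fin (N + 3)) ℝ :=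
  fun p q =>
    if (p : ℕ) + 1 = (q : ℕ) then jacobiEntry lam p
    else if (q : ℕ) + 1 = (p : ℕ) then jacobiEntry lam q
    else 0

/-!
Write `ρ = (1, e₁, …, eₙ, 0)` for the occupancy vector extended by the boundary values and
`a_k = λ_k^{-1/2}` for the off-diagonal entries of `A(λ)`. Define `ζ` by `ζ₀ = 1` and
`a_k ζ_{k+1} = σ ρ_k ζ_k`, so that `ρ_k` is recovered from `ζ_{k+1} / ζ_k`. Row `k + 1` of
`A ζ = σ ζ` reads `a_k ζ_k + σ ρ_{k+1} ζ_{k+1} = σ ζ_{k+1}`, which after multiplying by `a_k` is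
`σ² λ_k ρ_k (1 - ρ_{k+1}) = 1`: since `σ⁻² = λₙ eₙ` this is exactly the steady-state equation
for the `k`-th flow. Row `0` is `ρ₀ = 1`, and the last row holds because `ρ_{n+1} = 0`.
-/

open Finset Matrix

section JacobiMatrix

variable {N : ℕ} (lam : Fin (N + 2) → ℝ)

lemma jacobiEntry_of_lt {j : ℕ} (hj : j < N + 2) :
    jacobiEntry lam j = (√(lam ⟨j, hj⟩))⁻¹ :=
  dif_pos hj

lemma jacobiEntry_eq_zero {j : ℕ} (hj : N + 2 ≤ j) : jacobiEntry lam j = 0 :=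
  dif_neg (by omega)

lemma jacobiMat_mulVec_apply (v : ℕ → ℝ) (p : Fin (N + 3)) :
    (jacobiMat lam *ᵥ fun q => v q) p =
      ∑ n ∈ range (N + 3), ((if n = p + 1 then jacobiEntry lam p * v n else 0) +
        (if n + 1 = p then jacobiEntry lam n * v n else 0)) := by
  rw [mulVec, dotProduct, ← Fin.sum_univ_eq_sum_range]
  refine sum_congr rfl fun q _ => ?_
  simp only [jacobiMat]
  split_ifs <;> first | omega | ring

lemma jacobiMat_mulVec_zero (v : ℕ → ℝ) :
    (jacobiMat lam *ᵥ fun q => v q) 0 = jacobiEntry lam 0 * v 1 := by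
  simp [jacobiMat_mulVec_apply]

lemma jacobiMat_mulVec_succ (v : ℕ → ℝ) {k : ℕ} (hk : k + 1 < N + 3) :
    (jacobiMat lam *ᵥ fun q => v q) ⟨k + 1, hk⟩ =
      jacobiEntry lam k * v k + jacobiEntry lam (k + 1) * v (k + 2) := by
  simp only [jacobiMat_mulVec_apply, sum_add_distrib, Nat.add_right_cancel_iff, sum_ite_eq',
    mem_range]
  rw [if_pos (show k < N + 3 by omega)]
  split_ifs
  · ring
  · rw [jacobiEntry_eq_zero lam (show N + 2 ≤ k + 1 by omega)]
    ring

variable {lam}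

lemma jacobiEntry_pos (hlam : ∀ j, 0 < lam j) {j : ℕ} (hj : j < N + 2) :
    0 < jacobiEntry lam j := by
  rw [jacobiEntry_of_lt lam hj]
  exact inv_pos.2 (Real.sqrt_pos.2 (hlam _))

lemma jacobiEntry_sq_mul (hlam : ∀ j, 0 < lam j) {j : ℕ} (hj : j < N + 2) :
    jacobiEntry lam j ^ 2 * lam ⟨j, hj⟩ = 1 := by
  rw [jacobiEntry_of_lt lam hj, inv_pow, Real.sq_sqrt (hlam _).le, inv_mul_cancel₀ (hlam _).ne']

variable (lam) in
noncomputable def jacobiVectorOfRatios (σ : ℝ) (ρ : ℕ → ℝ) (k : ℕ) : ℝ :=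
  ∏ i ∈ range k, σ * ρ i / jacobiEntry lam i

variable {σ : ℝ} {ρ : ℕ → ℝ}

lemma jacobiVectorOfRatios_zero : jacobiVectorOfRatios lam σ ρ 0 = 1 :=
  prod_range_zero _

lemma jacobiEntry_mul_jacobiVectorOfRatios_succ (hlam : ∀ j, 0 < lam j) {k : ℕ}
    (hk : k < N + 2) :
    jacobiEntry lam k * jacobiVectorOfRatios lam σ ρ (k + 1) =
      σ * ρ k * jacobiVectorOfRatios lam σ ρ k := by
  rw [jacobiVectorOfRatios, prod_range_succ, ← jacobiVectorOfRatios]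
  field_simp [(jacobiEntry_pos hlam hk).ne']

lemma jacobiVectorOfRatios_pos (hlam : ∀ j, 0 < lam j) (hσ : 0 < σ)
    (hρ : ∀ i < N + 2, 0 < ρ i) {k : ℕ} (hk : k ≤ N + 2) :
    0 < jacobiVectorOfRatios lam σ ρ k :=
  prod_pos fun i hi =>
    have hi : i < N + 2 := by rw [mem_range] at hi; omega
    div_pos (mul_pos hσ (hρ i hi)) (jacobiEntry_pos hlam hi)

lemma ratio_eq_of_jacobiVectorOfRatios (hlam : ∀ j, 0 < lam j) (hσ : σ ≠ 0) {k : ℕ}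
    (hk : k < N + 2) (hv : jacobiVectorOfRatios lam σ ρ k ≠ 0) :
    ρ k = jacobiEntry lam k * σ⁻¹ *
      (jacobiVectorOfRatios lam σ ρ (k + 1) / jacobiVectorOfRatios lam σ ρ k) := by
  have hstep := jacobiEntry_mul_jacobiVectorOfRatios_succ (σ := σ) (ρ := ρ) hlam hk
  field_simp
  linear_combination -hstep

theorem jacobiMat_mulVec_jacobiVectorOfRatios (hlam : ∀ j, 0 < lam j) (h0 : ρ 0 = 1)
    (hlast : ρ (N + 2) = 0)
    (hρ : ∀ k (hk : k < N + 2), σ ^ 2 * (lam ⟨k, hk⟩ * ρ k * (1 - ρ (k + 1))) = 1) :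
    (jacobiMat lam *ᵥ fun p : Fin (N + 3) => jacobiVectorOfRatios lam σ ρ p) =
      σ • fun p : Fin (N + 3) => jacobiVectorOfRatios lam σ ρ p := by
  set v := jacobiVectorOfRatios lam σ ρ
  ext ⟨_ | k, hp⟩
  · have hstep := jacobiEntry_mul_jacobiVectorOfRatios_succ (σ := σ) (ρ := ρ) hlam (k := 0)
      (by omega)
    rw [show (⟨0, hp⟩ : Fin (N + 3)) = 0 from rfl, jacobiMat_mulVec_zero, hstep]
    simp [v, h0, jacobiVectorOfRatios_zero]
  · have hk : k < N + 2 := by omega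
    have hnext : jacobiEntry lam (k + 1) * v (k + 2) = σ * ρ (k + 1) * v (k + 1) := by
      by_cases hk' : k + 1 < N + 2
      · exact jacobiEntry_mul_jacobiVectorOfRatios_succ hlam hk'
      · rw [jacobiEntry_eq_zero lam (by omega), show k + 1 = N + 2 by omega, hlast]
        ring
    have hstep := jacobiEntry_mul_jacobiVectorOfRatios_succ (σ := σ) (ρ := ρ) hlam hk
    have hsq := jacobiEntry_sq_mul hlam hk
    have ha := (jacobiEntry_pos hlam hk).ne'
    rw [jacobiMat_mulVec_succ, hnext, Pi.smul_apply, smul_eq_mul]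
    refine mul_left_cancel₀ ha ?_
    linear_combination (σ * (ρ (k + 1) - 1)) * hstep - jacobiEntry lam k ^ 2 * v k * hρ k hk
      + σ ^ 2 * ρ k * (1 - ρ (k + 1)) * v k * hsq

end JacobiMatrix

section SteadyState

variable {N : ℕ} {lam : Fin (N + 2) → ℝ} {u : ℝ} {x : Fin (N + 1) → ℝ}

noncomputable def rfmExtNat (u : ℝ) (x : Fin (N + 1) → ℝ) (k : ℕ) : ℝ :=
  if h : k < N + 3 then rfmExt u x ⟨k, h⟩ else 0

lemma rfmExtNat_zero : rfmExtNat u x 0 = u := by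
  simp [rfmExtNat, rfmExt]

lemma rfmExtNat_succ (j : Fin (N + 1)) : rfmExtNat u x (j + 1) = x j := by
  rw [rfmExtNat, dif_pos (by omega)]
  exact (Fin.cons_succ _ _ j.castSucc).trans (Fin.snoc_castSucc _ _ j)

lemma rfmExtNat_last : rfmExtNat u x (N + 2) = 0 := by
  rw [rfmExtNat, dif_pos (by omega)]
  exact (Fin.cons_succ _ _ (Fin.last _)).trans (Fin.snoc_last _ _)

lemma rfmExtNat_pos (hu : 0 < u) (hx : ∀ j, 0 < x j) {k : ℕ} (hk : k < N + 2) :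
    0 < rfmExtNat u x k := by
  rcases k with _ | j
  · rwa [rfmExtNat_zero]
  · exact (rfmExtNat_succ (u := u) (x := x) ⟨j, by omega⟩).symm ▸ hx _

lemma rfmFlow_eq_rfmExtNat (k : ℕ) (hk : k < N + 2) :
    rfmFlow lam u x ⟨k, hk⟩ = lam ⟨k, hk⟩ * rfmExtNat u x k * (1 - rfmExtNat u x (k + 1)) := by
  rw [rfmExtNat, rfmExtNat, dif_pos (by omega), dif_pos (by omega)]
  rfl

lemma rfmFlow_last :
    rfmFlow lam u x (Fin.last (N + 1)) = lam (Fin.last (N + 1)) * x (Fin.last N) := by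
  have hx := rfmExtNat_succ (u := u) (x := x) (Fin.last N)
  rw [Fin.val_last] at hx
  rw [show Fin.last (N + 1) = ⟨N + 1, by omega⟩ from rfl, rfmFlow_eq_rfmExtNat, hx,
    rfmExtNat_last, sub_zero, mul_one]

lemma rfmSS.rfmFlow_eq_last (h : rfmSS lam u x) (j : Fin (N + 2)) :
    rfmFlow lam u x j = rfmFlow lam u x (Fin.last (N + 1)) := by
  have hzero : ∀ i, rfmFlow lam u x i = rfmFlow lam u x 0 :=
    Fin.induction rfl fun i hi => (h i).symm.trans hi
  rw [hzero j, hzero (Fin.last _)]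

end SteadyState

/-- If `e ∈ (0,1)^n` satisfies the RFM steady-state equations and
`σ := (λ_n e_n)^{-1/2}`, then there is a positive vector `ζ` with `A(λ) ζ = σ ζ` and
`e_i = λ_i^{-1/2} σ^{-1} ζ_{i+2} / ζ_{i+1}` for all `i`. -/
theorem steady_state_gives_spectral_representation
    (N : ℕ) (lam : Fin (N + 2) → ℝ) (hlam : ∀ j, 0 < lam j)
    (e : Fin (N + 1) → ℝ) (he : ∀ j, e j ∈ Set.Ioo (0 : ℝ) 1)
    (heq : rfmSS lam 1 e)
    (σ : ℝ) (hσ : σ = (Real.sqrt (lam (Fin.last (N + 1)) * e (Fin.last N)))⁻¹) :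
    ∃ ζ : Fin (N + 3) → ℝ,
      (∀ k, 0 < ζ k) ∧ (jacobiMat lam).mulVec ζ = σ • ζ ∧
      ∀ j : Fin (N + 1),
        e j = (Real.sqrt (lam j.succ))⁻¹ * σ⁻¹ * (ζ j.succ.succ / ζ j.succ.castSucc) := by
  have hr : 0 < lam (Fin.last (N + 1)) * e (Fin.last N) := mul_pos (hlam _) (he _).1
  have hσ_pos : 0 < σ := hσ ▸ inv_pos.2 (Real.sqrt_pos.2 hr)
  have hσ_sq : σ ^ 2 * (lam (Fin.last (N + 1)) * e (Fin.last N)) = 1 := by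
    rw [hσ, inv_pow, Real.sq_sqrt hr.le, inv_mul_cancel₀ hr.ne']
  have hρ : ∀ k (hk : k < N + 2),
      σ ^ 2 * (lam ⟨k, hk⟩ * rfmExtNat 1 e k * (1 - rfmExtNat 1 e (k + 1))) = 1 := by
    intro k hk
    rw [← rfmFlow_eq_rfmExtNat, heq.rfmFlow_eq_last, rfmFlow_last, hσ_sq]
  have hζ_pos : ∀ k ≤ N + 2, 0 < jacobiVectorOfRatios lam σ (rfmExtNat 1 e) k := fun k =>
    jacobiVectorOfRatios_pos hlam hσ_pos fun i => rfmExtNat_pos one_pos fun j => (he j).1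
  refine ⟨fun p => jacobiVectorOfRatios lam σ (rfmExtNat 1 e) p, fun p => hζ_pos p (by omega),
    jacobiMat_mulVec_jacobiVectorOfRatios hlam rfmExtNat_zero rfmExtNat_last hρ, fun j => ?_⟩
  have hj : (j : ℕ) + 1 < N + 2 := by omega
  rw [← rfmExtNat_succ (u := 1) (x := e) j,
    ratio_eq_of_jacobiVectorOfRatios hlam hσ_pos.ne' hj (hζ_pos _ hj.le).ne',
    jacobiEntry_of_lt lam hj]
  rfl
end
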